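/- arXiv:2305.10769 — 4 statements merged into one kernel-verified Lean document; each statement's English description precedes it below -/
import Mathlib

section
/- Let E be a real normed vector space, let f, fEMA, fPsi : E → ℝ → E be functions, let K ≥ 0, γ₁ ≥ 0, γ₂ ≥ 0, h > 0, and fix X₀, X₁ ∈ E and t ∈ ℝ. Set X_t := t • X₁ + (1 − t) • X₀ and X_{t−h} := X_t − h • (X₁ − X₀). Suppose (i) ‖f X_t t − fEMA (X_t − h • fPsi X_t t) (t − h)‖ ≤ γ₁, (ii) for every y ∈ E, ‖f y (t − h) − fEMA y (t − h)‖ ≤ γ₂, and (iii) the map y ↦ f y (t − h) is K-Lipschitz. Then ‖f X_t t − f X_{t−h} (t − h)‖ ≤ γ₁ + γ₂ + K * h * ‖(X₁ − X₀) − fPsi X_t t‖. -/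
/-- Single-step estimate (inductive step of Theorem 2 of "Catch-Up Distillation").
`f` is the velocity estimation model, `fEMA` its EMA copy, `fPsi` a pre-trained model.
With `Xt = t • X₁ + (1 - t) • X₀` and `Xth = Xt - h • (X₁ - X₀)`, the catch-up loss bound `γ₁`,
the EMA-gap bound `γ₂`, and `K`-Lipschitzness of `f · (t - h)` combine into the stated bound. -/
theorem catch_up_single_step
    {E : Type*} [NormedAddCommGroup E] [NormedSpace ℝ E]
    (f fEMA fPsi : E → ℝ → E) (K γ₁ γ₂ h : ℝ)
    (hK : 0 ≤ K) (hγ₁ : 0 ≤ γ₁) (hγ₂ : 0 ≤ γ₂) (hh : 0 < h)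
    (X₀ X₁ : E) (t : ℝ)
    (Xt Xth : E) (hXt : Xt = t • X₁ + (1 - t) • X₀) (hXth : Xth = Xt - h • (X₁ - X₀))
    (h1 : ‖f Xt t - fEMA (Xt - h • fPsi Xt t) (t - h)‖ ≤ γ₁)
    (h2 : ∀ y : E, ‖f y (t - h) - fEMA y (t - h)‖ ≤ γ₂)
    (h3 : ∀ x y : E, ‖f x (t - h) - f y (t - h)‖ ≤ K * ‖x - y‖) :
    ‖f Xt t - f Xth (t - h)‖ ≤ γ₁ + γ₂ + K * h * ‖(X₁ - X₀) - fPsi Xt t‖ := by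
  set z := Xt - h • fPsi Xt t with hz
  have tri : ‖f Xt t - f Xth (t - h)‖ ≤
      ‖f Xt t - fEMA z (t - h)‖ + ‖fEMA z (t - h) - f z (t - h)‖ +
        ‖f z (t - h) - f Xth (t - h)‖ := by
    calc ‖f Xt t - f Xth (t - h)‖
        = ‖(f Xt t - fEMA z (t - h)) + (fEMA z (t - h) - f z (t - h)) +
            (f z (t - h) - f Xth (t - h))‖ := by congr 1; abel
      _ ≤ _ := norm_add₃_le
  have hb : ‖fEMA z (t - h) - f z (t - h)‖ ≤ γ₂ := by
    rw [norm_sub_rev]; exact h2 z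
  have hc : ‖f z (t - h) - f Xth (t - h)‖ ≤ K * h * ‖(X₁ - X₀) - fPsi Xt t‖ := by
    have := h3 z Xth
    have hz' : z - Xth = h • ((X₁ - X₀) - fPsi Xt t) := by
      rw [hz, hXth]; module
    rw [hz'] at this
    calc ‖f z (t - h) - f Xth (t - h)‖ ≤ K * ‖h • ((X₁ - X₀) - fPsi Xt t)‖ := this
      _ = K * h * ‖(X₁ - X₀) - fPsi Xt t‖ := by
          rw [norm_smul, Real.norm_eq_abs, abs_of_pos hh]; ring
  linarith
end

section
/- Let E be a real normed vector space, let f, fEMA, fPsi : E → ℝ → E, let K ≥ 0, γ₁ ≥ 0, γ₂ ≥ 0, M ≥ 0, h > 0, fix X₀, X₁ ∈ E, and for s ∈ ℝ set X_s := s • X₁ + (1 − s) • X₀. Let n : ℕ with n ≥ 1, let t_a, t_b ∈ ℝ with t_b = t_a + n * h, and write t_i := t_a + i * h for 0 ≤ i ≤ n. Suppose that for every i with 1 ≤ i ≤ n: (i) ‖f X_{t_i} t_i − fEMA (X_{t_i} − h • fPsi X_{t_i} t_i) (t_i − h)‖ ≤ γ₁; (ii) for every y ∈ E, ‖f y (t_i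 − h) − fEMA y (t_i − h)‖ ≤ γ₂; (iii) the map y ↦ f y (t_i − h) is K-Lipschitz; and (iv) ‖fPsi X_{t_i} t_i − (X₁ − X₀)‖ ≤ M. Then ‖f X_{t_b} t_b − f X_{t_a} t_a‖ ≤ ((t_b − t_a) / h) * (γ₁ + γ₂ + K * h * M). -/
/-!
Along the straight path the exact velocity is the constant `X₁ - X₀`, so one step of size `h`
back along it lands at `X (t - h)`. The catch-up target is evaluated instead at
`X t - h • fPsi (X t) t`, which is within `h * M` of `X (t - h)`. Passing from `f` at time `t` to
`f` at time `t - h` therefore costs at most `γ₁` (catch-up loss), `γ₂` (EMA gap) and `K * h * M`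
(Lipschitz transport of the target point), and the `n = (t_b - t_a) / h` steps add up.
-/

section Telescoping

variable {E : Type*} [SeminormedAddCommGroup E]

theorem norm_sub_zero_le_mul_of_norm_succ_sub_le {g : ℕ → E} {C : ℝ} (n : ℕ)
    (hg : ∀ k < n, ‖g (k + 1) - g k‖ ≤ C) : ‖g n - g 0‖ ≤ n * C := by
  have := dist_le_range_sum_of_dist_le (f := g) (d := fun _ => C) n fun hk => by
    rw [dist_comm, dist_eq_norm]
    exact hg _ hk
  simpa [dist_comm, dist_eq_norm] using this

end Telescoping

section CatchUp

variable {E : Type*} [NormedAddCommGroup E] [NormedSpace ℝ E]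

theorem interpolation_sub_step_sub {X : ℝ → E} {X₀ X₁ : E}
    (hX : ∀ s : ℝ, X s = s • X₁ + (1 - s) • X₀) (t h : ℝ) (v : E) :
    X t - h • v - X (t - h) = h • ((X₁ - X₀) - v) := by
  rw [hX, hX]
  module

theorem norm_catchUp_step_le (f fEMA fPsi : E → ℝ → E) {K γ₁ γ₂ M h : ℝ}
    (hK : 0 ≤ K) (hh : 0 ≤ h) {X₀ X₁ : E} {X : ℝ → E}
    (hX : ∀ s : ℝ, X s = s • X₁ + (1 - s) • X₀) (t : ℝ)
    (h1 : ‖f (X t) t - fEMA (X t - h • fPsi (X t) t) (t - h)‖ ≤ γ₁)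
    (h2 : ∀ y : E, ‖f y (t - h) - fEMA y (t - h)‖ ≤ γ₂)
    (h3 : ∀ x y : E, ‖f x (t - h) - f y (t - h)‖ ≤ K * ‖x - y‖)
    (h4 : ‖fPsi (X t) t - (X₁ - X₀)‖ ≤ M) :
    ‖f (X t) t - f (X (t - h)) (t - h)‖ ≤ γ₁ + γ₂ + K * h * M := by
  set y := X t - h • fPsi (X t) t
  have hy : ‖y - X (t - h)‖ ≤ h * M := by
    rw [interpolation_sub_step_sub hX, norm_smul, Real.norm_of_nonneg hh, norm_sub_rev]
    gcongr
  calc ‖f (X t) t - f (X (t - h)) (t - h)‖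
      = ‖(f (X t) t - fEMA y (t - h)) + (fEMA y (t - h) - f y (t - h))
          + (f y (t - h) - f (X (t - h)) (t - h))‖ := by abel_nf
    _ ≤ ‖f (X t) t - fEMA y (t - h)‖ + ‖fEMA y (t - h) - f y (t - h)‖
          + ‖f y (t - h) - f (X (t - h)) (t - h)‖ := norm_add₃_le
    _ ≤ γ₁ + γ₂ + K * (h * M) := by
      gcongr
      · rw [norm_sub_rev]
        exact h2 y
      · exact (h3 _ _).trans (by gcongr)
    _ = γ₁ + γ₂ + K * h * M := by ring

end CatchUp

theorem catch_up_distillation_stability_general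
    {E : Type*} [NormedAddCommGroup E] [NormedSpace ℝ E]
    (f fEMA fPsi : E → ℝ → E) (K γ₁ γ₂ M h : ℝ)
    (hK : 0 ≤ K) (hh : 0 < h)
    (X₀ X₁ : E) (X : ℝ → E) (hX : ∀ s : ℝ, X s = s • X₁ + (1 - s) • X₀)
    (n : ℕ) (ta tb : ℝ) (htb : tb = ta + n * h)
    (h1 : ∀ i : ℕ, 1 ≤ i → i ≤ n →
      ‖f (X (ta + i * h)) (ta + i * h) -
        fEMA (X (ta + i * h) - h • fPsi (X (ta + i * h)) (ta + i * h)) (ta + i * h - h)‖ ≤ γ₁)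
    (h2 : ∀ i : ℕ, 1 ≤ i → i ≤ n → ∀ y : E,
      ‖f y (ta + i * h - h) - fEMA y (ta + i * h - h)‖ ≤ γ₂)
    (h3 : ∀ i : ℕ, 1 ≤ i → i ≤ n → ∀ x y : E,
      ‖f x (ta + i * h - h) - f y (ta + i * h - h)‖ ≤ K * ‖x - y‖)
    (h4 : ∀ i : ℕ, 1 ≤ i → i ≤ n →
      ‖fPsi (X (ta + i * h)) (ta + i * h) - (X₁ - X₀)‖ ≤ M) :
    ‖f (X tb) tb - f (X ta) ta‖ ≤ ((tb - ta) / h) * (γ₁ + γ₂ + K * h * M) := by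
  have hsteps : (tb - ta) / h = n := by
    rw [htb]
    field_simp
    ring
  have hstep : ∀ k < n, ‖f (X (ta + (k + 1 : ℕ) * h)) (ta + (k + 1 : ℕ) * h)
      - f (X (ta + k * h)) (ta + k * h)‖ ≤ γ₁ + γ₂ + K * h * M := by
    intro k hk
    have hprev : ta + ((k + 1 : ℕ) : ℝ) * h - h = ta + k * h := by
      push_cast
      ring
    have hk' := norm_catchUp_step_le f fEMA fPsi hK hh.le hX _ (h1 (k + 1) k.succ_pos hk)
      (h2 (k + 1) k.succ_pos hk) (h3 (k + 1) k.succ_pos hk) (h4 (k + 1) k.succ_pos hk)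
    rwa [hprev] at hk'
  have htotal := norm_sub_zero_le_mul_of_norm_succ_sub_le
    (g := fun k : ℕ => f (X (ta + k * h)) (ta + k * h)) n hstep
  rw [hsteps, htb]
  simpa using htotal

/-- Theorem 2 of "Catch-Up Distillation": stability bound for catch-up distillation.
Along the interpolation path `X s = s • X₁ + (1 - s) • X₀`, on the grid
`t_i = t_a + i * h` (for `1 ≤ i ≤ n`, with `t_b = t_a + n * h`), the catch-up loss bound `γ₁`,
the EMA-gap bound `γ₂`, `K`-Lipschitzness of `f` in its first argument, and the bound `M` on
the deviation of `fPsi` from the true velocity `X₁ - X₀` yield the stated variation bound. -/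
theorem catch_up_distillation_stability
    {E : Type*} [NormedAddCommGroup E] [NormedSpace ℝ E]
    (f fEMA fPsi : E → ℝ → E) (K γ₁ γ₂ M h : ℝ)
    (hK : 0 ≤ K) (hγ₁ : 0 ≤ γ₁) (hγ₂ : 0 ≤ γ₂) (hM : 0 ≤ M) (hh : 0 < h)
    (X₀ X₁ : E) (X : ℝ → E) (hX : ∀ s : ℝ, X s = s • X₁ + (1 - s) • X₀)
    (n : ℕ) (hn : 1 ≤ n) (ta tb : ℝ) (htb : tb = ta + n * h)
    (h1 : ∀ i : ℕ, 1 ≤ i → i ≤ n →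
      ‖f (X (ta + i * h)) (ta + i * h) -
        fEMA (X (ta + i * h) - h • fPsi (X (ta + i * h)) (ta + i * h)) (ta + i * h - h)‖ ≤ γ₁)
    (h2 : ∀ i : ℕ, 1 ≤ i → i ≤ n → ∀ y : E,
      ‖f y (ta + i * h - h) - fEMA y (ta + i * h - h)‖ ≤ γ₂)
    (h3 : ∀ i : ℕ, 1 ≤ i → i ≤ n → ∀ x y : E,
      ‖f x (ta + i * h - h) - f y (ta + i * h - h)‖ ≤ K * ‖x - y‖)
    (h4 : ∀ i : ℕ, 1 ≤ i → i ≤ n →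
      ‖fPsi (X (ta + i * h)) (ta + i * h) - (X₁ - X₀)‖ ≤ M) :
    ‖f (X tb) tb - f (X ta) ta‖ ≤ ((tb - ta) / h) * (γ₁ + γ₂ + K * h * M) :=
  catch_up_distillation_stability_general f fEMA fPsi K γ₁ γ₂ M h hK hh X₀ X₁ X hX n ta tb htb h1 h2
    h3 h4
end

section
/- Let V be a vector space over ℝ, let X₀, X₁ ∈ V, and let h ∈ ℝ with h ≠ 0. Define T : ℕ → V by T 1 = X₀ + (h − 1) • X₁ and, for every i ≥ 1, T (i+1) = (1 / ((i+1)*h)) • ((i*h) • T i + h • X₀ + h*(2*(i*h) − 1) • X₁ + h^2 • X₁). Then for every i ≥ 1, T i = X₀ + (i*h − 1) • X₁. -/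
/-- Chain-reaction conclusion of Appendix B of "Catch-Up Distillation": starting from the
Consistency Training target `X₀ + (h - 1) • X₁` at time `h`, the recursion
`T (i+1) = (1/((i+1)h)) • ((ih) • T i + h • X₀ + h(2ih - 1) • X₁ + h² • X₁)` forces the
target at every grid time `i*h` to be `X₀ + (i*h - 1) • X₁`. -/
theorem consistency_target_chain
    {V : Type*} [AddCommGroup V] [Module ℝ V]
    (X₀ X₁ : V) (h : ℝ) (hh : h ≠ 0)
    (T : ℕ → V)
    (hT1 : T 1 = X₀ + (h - 1) • X₁)
    (hTrec : ∀ i : ℕ, 1 ≤ i →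
      T (i + 1) = (1 / (((i : ℝ) + 1) * h)) •
        (((i : ℝ) * h) • T i + h • X₀ + (h * (2 * ((i : ℝ) * h) - 1)) • X₁ + h^2 • X₁)) :
    ∀ i : ℕ, 1 ≤ i → T i = X₀ + ((i : ℝ) * h - 1) • X₁ := by
  intro i hi
  induction i with
  | zero => omega
  | succ n ih =>
    rcases Nat.eq_or_lt_of_le hi with h1 | h1
    · simpa [← h1] using hT1
    · have hn : 1 ≤ n := by omega
      rw [hTrec n hn, ih hn]
      have hne : ((n : ℝ) + 1) * h ≠ 0 := by positivity
      rw [smul_add, smul_add, smul_add, smul_smul, smul_smul, smul_smul, smul_smul,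
        smul_add, smul_smul]
      push_cast
      have e1 : 1 / (((n : ℝ) + 1) * h) * ((n : ℝ) * h) * ((n : ℝ) * h - 1)
          + 1 / (((n : ℝ) + 1) * h) * (h * (2 * ((n : ℝ) * h) - 1))
          + 1 / (((n : ℝ) + 1) * h) * h ^ 2 = ((n : ℝ) + 1) * h - 1 := by
        field_simp
        ring
      have e2 : 1 / (((n : ℝ) + 1) * h) * ((n : ℝ) * h)
          + 1 / (((n : ℝ) + 1) * h) * h = 1 := by
        field_simp
      calc (1 / (((n : ℝ) + 1) * h) * ((n : ℝ) * h)) • X₀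
            + (1 / (((n : ℝ) + 1) * h) * ((n : ℝ) * h) * ((n : ℝ) * h - 1)) • X₁
            + (1 / (((n : ℝ) + 1) * h) * h) • X₀
            + (1 / (((n : ℝ) + 1) * h) * (h * (2 * ((n : ℝ) * h) - 1))) • X₁
            + (1 / (((n : ℝ) + 1) * h) * h ^ 2) • X₁
          = (1 / (((n : ℝ) + 1) * h) * ((n : ℝ) * h)
              + 1 / (((n : ℝ) + 1) * h) * h) • X₀
            + (1 / (((n : ℝ) + 1) * h) * ((n : ℝ) * h) * ((n : ℝ) * h - 1)
              + 1 / (((n : ℝ) + 1) * h) * (h * (2 * ((n : ℝ) * h) - 1))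
              + 1 / (((n : ℝ) + 1) * h) * h ^ 2) • X₁ := by
            rw [add_smul, add_smul, add_smul]; abel
        _ = X₀ + (((n : ℝ) + 1) * h - 1) • X₁ := by rw [e1, e2, one_smul]
end

section
/- Fix a₃, b₃₂ ∈ ℝ with b₃₂ ≠ 0 and a₃ ≠ 0, take a₂ = 1, and let j ∈ ℝ with j ≠ 0. There exist ω₁, ω₂, ω₃ ∈ ℝ satisfying the four equations ω₁ + ω₂ + ω₃ = j, ω₂ * a₂ + ω₃ * a₃ = j/2, ω₂ * a₂^2 + ω₃ * a₃^2 = j/3, and ω₂ * b₃₂ * a₂ = j/6 if and only if a₃ − a₂ = (3*a₃ − 3*a₂ + 1) * b₃₂ (equivalently, a₃ − 1 = (3*a₃ − 2) * b₃₂). -/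
/-! Writing `x = ω₂ a₂` and `y = ω₃ a₃`, the last three conditions read `x + y = j/2`,
`x a₂ + y a₃ = j/3` and `x b₃₂ = j/6`; `ω₁` only enters the first one and is then determined.
Eliminating `y` gives `x (a₃ - a₂) = j (a₃/2 - 1/3)`, and multiplying by `6 b₃₂` turns this into
`j (a₃ - a₂) = j (3 a₃ - 2) b₃₂`. Conversely, under this relation `x = j / (6 b₃₂)` and
`y = j/2 - x` solve the system. -/

theorem nodes_relation_of_order_conditions {a₂ a₃ b₃₂ j ω₂ ω₃ : ℝ} (hj : j ≠ 0)
    (h₂ : ω₂ * a₂ + ω₃ * a₃ = j/2) (h₃ : ω₂ * a₂^2 + ω₃ * a₃^2 = j/3)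
    (h₄ : ω₂ * b₃₂ * a₂ = j/6) :
    a₃ - a₂ = (3*a₃ - 2) * b₃₂ :=
  mul_left_cancel₀ hj <| by
    linear_combination 6*b₃₂*a₃*h₂ - 6*b₃₂*h₃ - 6*(a₃ - a₂)*h₄

theorem exists_order_conditions_of_nodes_relation {a₂ a₃ b₃₂ : ℝ} (ha₂ : a₂ ≠ 0)
    (ha₃ : a₃ ≠ 0) (hb : b₃₂ ≠ 0) (h : a₃ - a₂ = (3*a₃ - 2) * b₃₂) (j : ℝ) :
    ∃ ω₂ ω₃ : ℝ,
      ω₂ * a₂ + ω₃ * a₃ = j/2 ∧ ω₂ * a₂^2 + ω₃ * a₃^2 = j/3 ∧ ω₂ * b₃₂ * a₂ = j/6 := by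
  refine ⟨j / (6 * b₃₂ * a₂), j * (3 * b₃₂ - 1) / (6 * b₃₂ * a₃), ?_, ?_, ?_⟩
  · field_simp
    ring
  · field_simp
    linear_combination -3 * j * h
  · field_simp

/-- Scaled Runge–Kutta 34 order conditions (Eq. 20/21 of "Catch-Up Distillation", Appendix D),
specialized to `a₂ = 1`: for fixed nodes with `b₃₂ ≠ 0`, `a₃ ≠ 0`, and any `j ≠ 0`, weights
`ω₁, ω₂, ω₃` satisfying `ω₁ + ω₂ + ω₃ = j`, `ω₂ a₂ + ω₃ a₃ = j/2`, `ω₂ a₂² + ω₃ a₃² = j/3`,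
`ω₂ b₃₂ a₂ = j/6` exist iff `a₃ - a₂ = (3a₃ - 3a₂ + 1) b₃₂`. -/
theorem runge_kutta_34_order_conditions (a₂ a₃ b₃₂ j : ℝ)
    (ha₂ : a₂ = 1) (hb : b₃₂ ≠ 0) (ha : a₃ ≠ 0) (hj : j ≠ 0) :
    (∃ ω₁ ω₂ ω₃ : ℝ,
        ω₁ + ω₂ + ω₃ = j ∧
        ω₂ * a₂ + ω₃ * a₃ = j/2 ∧
        ω₂ * a₂^2 + ω₃ * a₃^2 = j/3 ∧
        ω₂ * b₃₂ * a₂ = j/6)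
      ↔ a₃ - a₂ = (3*a₃ - 3*a₂ + 1) * b₃₂ := by
  subst ha₂
  constructor
  · rintro ⟨-, ω₂, ω₃, -, h₂, h₃, h₄⟩
    linear_combination nodes_relation_of_order_conditions hj h₂ h₃ h₄
  · intro h
    obtain ⟨ω₂, ω₃, h₂, h₃, h₄⟩ :=
      exists_order_conditions_of_nodes_relation one_ne_zero ha hb (by linear_combination h) j
    exact ⟨j - ω₂ - ω₃, ω₂, ω₃, by ring, h₂, h₃, h₄⟩
end
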